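/- Let X(x,y,z) = (x(y+z), y(x+z), z(x+y)) on ℂ³ and let p = (x,0,0) with x ≠ 0. If (p_n) = (x_n,y_n,z_n) is a sequence in ℂ³ with p_n → p, and (α_n) ⊆ ℂ is a sequence such that α_n · X(p_n) → V = (v₁, 0, 0) ∈ ℂ³, then V = 0. -/

import Mathlib

/-!
Write `A, B, C` for the components of `α • X(x, y, z)`. Then `y C + z B = α y z (2x + y + z)` and
`A = B + C - 2 α y z`. Since `2x + y + z → 2x ≠ 0`, the first identity turns `B, C → 0` into
`α y z → 0`, and the second then gives `A → 0`, i.e. `v₁ = 0`.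
-/

open Filter Topology

section TopologicalField

variable {ι K : Type*} [Field K] [TopologicalSpace K] [IsTopologicalDivisionRing K]
  [T1Space K] {l : Filter ι}

theorem tendsto_zero_of_tendsto_mul_zero {f g : ι → K} {c : K}
    (hfg : Tendsto (fun i => f i * g i) l (𝓝 0)) (hg : Tendsto g l (𝓝 c)) (hc : c ≠ 0) :
    Tendsto f l (𝓝 0) := by
  have hquot : Tendsto (fun i => f i * g i / g i) l (𝓝 0) := by
    have h := hfg.div hg hc
    rwa [zero_div] at h
  refine hquot.congr' ?_
  filter_upwards [hg.eventually_ne hc] with i hi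
  exact mul_div_cancel_right₀ (f i) hi

theorem tendsto_first_component_zero [NeZero (2 : K)] {α x y z : ι → K} {x₀ : K} (hx₀ : x₀ ≠ 0)
    (hx : Tendsto x l (𝓝 x₀)) (hy : Tendsto y l (𝓝 0)) (hz : Tendsto z l (𝓝 0))
    (hB : Tendsto (fun i => α i * (y i * (x i + z i))) l (𝓝 0))
    (hC : Tendsto (fun i => α i * (z i * (x i + y i))) l (𝓝 0)) :
    Tendsto (fun i => α i * (x i * (y i + z i))) l (𝓝 0) := by
  have hweighted : Tendsto (fun i => α i * (y i * z i) * (2 * x i + y i + z i)) l (𝓝 0) := by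
    have h := (hy.mul hC).add (hz.mul hB)
    simp only [zero_mul, add_zero] at h
    exact h.congr fun i => by ring
  have hsum : Tendsto (fun i => 2 * x i + y i + z i) l (𝓝 (2 * x₀)) := by
    simpa using ((tendsto_const_nhds (x := (2 : K))).mul hx).add hy |>.add hz
  have hyz : Tendsto (fun i => α i * (y i * z i)) l (𝓝 0) :=
    tendsto_zero_of_tendsto_mul_zero hweighted hsum (mul_ne_zero two_ne_zero hx₀)
  have h := (hB.add hC).sub ((tendsto_const_nhds (x := (2 : K))).mul hyz)
  simp only [add_zero, mul_zero, sub_zero] at h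
  exact h.congr fun i => by ring

end TopologicalField

/-- Transversality computation at `p = (x,0,0)`, `x ≠ 0`, for
`X(x,y,z) = (x(y+z), y(x+z), z(x+y))`: if `pₙ → p` and `αₙ • X(pₙ) → (v₁,0,0)`, then
`v₁ = 0`. -/
theorem stmt_11 (x : ℂ) (hx : x ≠ 0)
    (x' y' z' : ℕ → ℂ) (α : ℕ → ℂ) (v₁ : ℂ)
    (hconv : Tendsto (fun n => (x' n, y' n, z' n)) atTop
      (nhds (x, (0 : ℂ), (0 : ℂ))))
    (hV : Tendsto (fun n =>
        (α n * (x' n * (y' n + z' n)), α n * (y' n * (x' n + z' n)),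
          α n * (z' n * (x' n + y' n))))
      atTop (nhds (v₁, (0 : ℂ), (0 : ℂ)))) :
    v₁ = 0 := by
  simp only [nhds_prod_eq, tendsto_prod_iff'] at hconv hV
  obtain ⟨hx', hy', hz'⟩ := hconv
  obtain ⟨hA, hB, hC⟩ := hV
  exact tendsto_nhds_unique hA (tendsto_first_component_zero hx hx' hy' hz' hB hC)
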